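/- Let 0 < α < n. For every sufficiently large prime p there exists a subset E ⊆ F^n (F the prime field of order p) such that c₁·p^α ≤ |E| ≤ c₂·p^α and |1̂_E(ξ)| ≤ C_n·√|E|·√(log p) for all ξ ≠ 0, and moreover, for any fixed η > 0 and any fixed set A ⊆ F^n with |A| ≥ p^{α/2}, one can additionally ensure |E ∩ A| ≤ η|A|. Here 1̂_E(ξ) = Σ_{x∈E} e(−x·ξ) with e(t) = e^{2πit/p}, and c₁, c₂, C_n are independent of p. -/

import Mathlib

open Finset

noncomputable def e (p : ℕ) (t : ZMod p) : ℂ :=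
  Complex.exp (2 * Real.pi * Complex.I * (t.val : ℂ) / (p : ℂ))

noncomputable def dft {p n : ℕ} [NeZero p] (f : (Fin n → ZMod p) → ℂ)
    (ξ : Fin n → ZMod p) : ℂ :=
  ∑ x : Fin n → ZMod p, e p (-(∑ i, x i * ξ i)) * f x

/-!
Choose `E` at random, each point of `F^n` independently with probability `q = m / p^n`,
`m = ⌈p^α⌉`. For a centred sum `X = ∑ a x (1_E x - q)` with `|a x| ≤ 1` and `|c| ≤ 1`,
`e^u ≤ 1 + u + u²` gives the exponential moment bound `𝔼 e^{cX} ≤ e^{c² q ∑ a²}`, hence the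
Chernoff tail `P(X ≥ t) ≤ e^{-t²/(4s)}` for `q ∑ a² ≤ s` and `t ≤ 2s`. Applied to `a = 1`,
`a = 1_A`, and to the real and imaginary parts of each character (whose full sum vanishes,
so that `1̂_E(ξ)` itself is such a centred sum), it shows that `|E|`, `|E ∩ A|` and each
`1̂_E(ξ)` at the scale `√(m log p)` are bad with probability at most `1/4`, `1/4` and
`4 p^{-n-2}`; a union bound over the `p^n - 1` frequencies leaves a good `E`.
-/

open Real Filter

lemma AddChar.map_sum_eq_prod {ι A M : Type*} [AddCommMonoid A] [CommMonoid M] (ψ : AddChar A M)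
    (s : Finset ι) (f : ι → A) : ψ (∑ i ∈ s, f i) = ∏ i ∈ s, ψ (f i) := by
  simpa only [AddChar.toMonoidHom_apply, toAdd_prod, toAdd_ofAdd] using
    map_prod ψ.toMonoidHom (fun i => Multiplicative.ofAdd (f i)) s

lemma e_eq_stdAddChar (p : ℕ) [NeZero p] (t : ZMod p) : e p t = ZMod.stdAddChar t := by
  rw [ZMod.stdAddChar_apply, ZMod.toCircle_apply, e]

lemma norm_e (p : ℕ) [NeZero p] (t : ZMod p) : ‖e p t‖ = 1 := by
  rw [e_eq_stdAddChar, ZMod.stdAddChar_apply, Circle.norm_coe]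

lemma sum_e_neg_dotProduct_eq_zero {p n : ℕ} [NeZero p] {ξ : Fin n → ZMod p} (hξ : ξ ≠ 0) :
    ∑ x : Fin n → ZMod p, e p (-(∑ i, x i * ξ i)) = 0 := by
  obtain ⟨i₀, hi₀⟩ := Function.ne_iff.mp hξ
  simp only [e_eq_stdAddChar, ← sum_neg_distrib, ← mul_neg, AddChar.map_sum_eq_prod]
  rw [← Fintype.prod_sum (fun i t => ZMod.stdAddChar (t * -ξ i))]
  exact prod_eq_zero (mem_univ i₀) <| by
    rw [AddChar.sum_mulShift _ (ZMod.isPrimitive_stdAddChar p), if_neg (neg_ne_zero.mpr hi₀),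
      Nat.cast_zero]

section RandomSet

variable {ι : Type*} [Fintype ι] {M : ℕ}

/-- Counting replaces probability: for a uniformly random labelling `ω`, the events
`ω x < m` are independent of probability `m / M`, so `randomSet m ω` is the random set of
density `m / M`. -/
def randomSet (m : ℕ) (ω : ι → Fin M) : Finset ι := {x | (ω x : ℕ) < m}

noncomputable def deviation (m : ℕ) (a : ι → ℝ) (ω : ι → Fin M) : ℝ :=
  ∑ x, a x * ((if (ω x : ℕ) < m then 1 else 0) - m / M)

lemma deviation_eq (m : ℕ) (a : ι → ℝ) (ω : ι → Fin M) :
    deviation m a ω = ∑ x ∈ randomSet m ω, a x - m / M * ∑ x, a x := by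
  simp only [deviation, randomSet, mul_sub, mul_ite, mul_one, mul_zero, sum_sub_distrib,
    ← sum_filter, sum_mul, mul_comm]

lemma deviation_smul (m : ℕ) (c : ℝ) (a : ι → ℝ) (ω : ι → Fin M) :
    deviation m (c • a) ω = c * deviation m a ω := by
  simp only [deviation, mul_sum, Pi.smul_apply, smul_eq_mul, mul_assoc]

lemma deviation_neg (m : ℕ) (a : ι → ℝ) (ω : ι → Fin M) :
    deviation m (-a) ω = -deviation m a ω := by
  simpa using deviation_smul m (-1) a ω

lemma sum_exp_mul_indicator_sub_le {m : ℕ} (hmM : m ≤ M) {c : ℝ} (hc : |c| ≤ 1) :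
    ∑ v : Fin M, exp (c * ((if (v : ℕ) < m then 1 else 0) - m / M)) ≤
      M * exp (c ^ 2 * (m / M)) := by
  rcases Nat.eq_zero_or_pos M with rfl | hM
  · simp
  set q : ℝ := m / M
  have hqM : q * M = m := div_mul_cancel₀ _ (by positivity)
  have hq0 : 0 ≤ q := by positivity
  have hq1 : q ≤ 1 := div_le_one_of_le₀ (by exact_mod_cast hmM) (by positivity)
  set Y : Fin M → ℝ := fun v => (if (v : ℕ) < m then 1 else 0) - q
  have hcount : ∑ v : Fin M, (if (v : ℕ) < m then (1 : ℝ) else 0) = m := by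
    rw [sum_boole, Fin.card_filter_val_lt, min_eq_right hmM]
  have hY : ∑ v, Y v = 0 := by
    simp only [Y, sum_sub_distrib, hcount, sum_const, card_univ, Fintype.card_fin, nsmul_eq_mul]
    linarith
  have hY2 : ∑ v, Y v ^ 2 = m * (1 - q) := by
    have (v : Fin M) : Y v ^ 2 = (if (v : ℕ) < m then 1 else 0) * (1 - 2 * q) + q ^ 2 := by
      simp only [Y]; split_ifs <;> ring
    simp only [this, sum_add_distrib, ← sum_mul, hcount, sum_const, card_univ, Fintype.card_fin,
      nsmul_eq_mul]
    linear_combination q * hqM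
  have hYc (v : Fin M) : |c * Y v| ≤ 1 := by
    rw [abs_mul]
    refine mul_le_one₀ hc (abs_nonneg _) (abs_le.mpr ⟨?_, ?_⟩) <;>
      simp only [Y] <;> split_ifs <;> linarith
  calc ∑ v, exp (c * Y v) ≤ ∑ v, (1 + c * Y v + (c * Y v) ^ 2) :=
        sum_le_sum fun v _ => by linarith [(abs_le.mp (abs_exp_sub_one_sub_id_le (hYc v))).2]
    _ = M * (1 + c ^ 2 * q) - c ^ 2 * q * m := by
        simp only [sum_add_distrib, ← mul_sum, mul_pow, hY, hY2, sum_const, card_univ,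
          Fintype.card_fin, nsmul_eq_mul]
        linear_combination (-c ^ 2) * hqM
    _ ≤ M * exp (c ^ 2 * q) := by
        have := add_one_le_exp (c ^ 2 * q)
        have : 0 ≤ c ^ 2 * q * m := by positivity
        nlinarith

variable [DecidableEq ι]

lemma sum_exp_deviation_le {m : ℕ} (hmM : m ≤ M) {a : ι → ℝ} (ha : ∀ x, |a x| ≤ 1) :
    ∑ ω : ι → Fin M, exp (deviation m a ω) ≤ M ^ Fintype.card ι * exp (m / M * ∑ x, a x ^ 2) := by
  set f : ι → Fin M → ℝ := fun x v => exp (a x * ((if (v : ℕ) < m then 1 else 0) - m / M))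
  calc ∑ ω : ι → Fin M, exp (deviation m a ω) = ∏ x, ∑ v, f x v := by
        rw [Fintype.prod_sum]
        exact sum_congr rfl fun ω _ => exp_sum _ _
    _ ≤ ∏ x : ι, (M * exp (m / M * a x ^ 2)) :=
        prod_le_prod (fun x _ => sum_nonneg fun v _ => (exp_pos _).le) fun x _ => by
          simpa only [mul_comm] using sum_exp_mul_indicator_sub_le hmM (ha x)
    _ = M ^ Fintype.card ι * exp (m / M * ∑ x, a x ^ 2) := by
        rw [prod_mul_distrib, prod_const, card_univ, mul_sum, exp_sum]

lemma card_deviation_ge_le {m : ℕ} (hmM : m ≤ M) {a : ι → ℝ} (ha : ∀ x, |a x| ≤ 1) {c : ℝ}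
    (hc₀ : 0 ≤ c) (hc₁ : c ≤ 1) (t : ℝ) :
    (#{ω : ι → Fin M | t ≤ deviation m a ω} : ℝ) ≤
      M ^ Fintype.card ι * exp (-(c * t) + c ^ 2 * (m / M * ∑ x, a x ^ 2)) := by
  have hca (x : ι) : |(c • a) x| ≤ 1 := by
    rw [Pi.smul_apply, smul_eq_mul, abs_mul, abs_of_nonneg hc₀]
    exact mul_le_one₀ hc₁ (abs_nonneg _) (ha x)
  have hmarkov : (#{ω : ι → Fin M | t ≤ deviation m a ω} : ℝ) * exp (c * t) ≤
      ∑ ω : ι → Fin M, exp (deviation m (c • a) ω) := by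
    simp only [deviation_smul]
    rw [← nsmul_eq_mul]
    refine (card_nsmul_le_sum _ _ _ fun ω hω => ?_).trans
      (sum_le_sum_of_subset_of_nonneg (subset_univ _) fun ω _ _ => (exp_pos _).le)
    exact exp_le_exp.mpr (mul_le_mul_of_nonneg_left (mem_filter.mp hω).2 hc₀)
  have hsq : ∑ x, (c • a) x ^ 2 = c ^ 2 * ∑ x, a x ^ 2 := by
    simp only [Pi.smul_apply, smul_eq_mul, mul_pow, mul_sum]
  rw [exp_add, exp_neg, ← div_eq_inv_mul, mul_div_assoc', le_div_iff₀ (exp_pos _)]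
  refine hmarkov.trans ((sum_exp_deviation_le hmM hca).trans_eq ?_)
  rw [hsq]; ring_nf

lemma card_deviation_ge_le_exp {m : ℕ} (hmM : m ≤ M) {a : ι → ℝ} (ha : ∀ x, |a x| ≤ 1) {s t : ℝ}
    (hs : 0 < s) (has : m / M * ∑ x, a x ^ 2 ≤ s) (ht₀ : 0 ≤ t) (ht : t ≤ 2 * s) :
    (#{ω : ι → Fin M | t ≤ deviation m a ω} : ℝ) ≤
      M ^ Fintype.card ι * exp (-(t ^ 2 / (4 * s))) := by
  refine (card_deviation_ge_le hmM ha (c := t / (2 * s)) (by positivity)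
    ((div_le_one (by positivity)).mpr ht) t).trans ?_
  gcongr
  calc -(t / (2 * s) * t) + (t / (2 * s)) ^ 2 * (m / M * ∑ x, a x ^ 2)
      ≤ -(t / (2 * s) * t) + (t / (2 * s)) ^ 2 * s := by gcongr
    _ = -(t ^ 2 / (4 * s)) := by field_simp; ring

lemma card_abs_deviation_ge_le_exp {m : ℕ} (hmM : m ≤ M) {a : ι → ℝ} (ha : ∀ x, |a x| ≤ 1)
    {s t : ℝ} (hs : 0 < s) (has : m / M * ∑ x, a x ^ 2 ≤ s) (ht₀ : 0 ≤ t) (ht : t ≤ 2 * s) :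
    (#{ω : ι → Fin M | t ≤ |deviation m a ω|} : ℝ) ≤
      2 * (M ^ Fintype.card ι * exp (-(t ^ 2 / (4 * s)))) := by
  have hneg : #{ω : ι → Fin M | t ≤ |deviation m a ω|} ≤
      #{ω : ι → Fin M | t ≤ deviation m a ω} + #{ω : ι → Fin M | t ≤ deviation m (-a) ω} := by
    simp only [le_abs, deviation_neg, filter_or]
    exact card_union_le _ _
  have h₁ := card_deviation_ge_le_exp hmM ha hs has ht₀ ht
  have h₂ := card_deviation_ge_le_exp hmM (a := -a) (by simpa using ha) hs (by simpa using has)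
    ht₀ ht
  have := (Nat.cast_le (α := ℝ)).mpr hneg
  push_cast at this
  linarith

lemma card_abs_card_randomSet_sub_ge_le {m : ℕ} (hmM : m ≤ M)
    (hμ : 0 < (m / M * Fintype.card ι : ℝ)) :
    (#{ω : ι → Fin M | m / M * Fintype.card ι / 2 ≤
        |(#(randomSet m ω) : ℝ) - m / M * Fintype.card ι|} : ℝ) ≤
      2 * (M ^ Fintype.card ι * exp (-(m / M * Fintype.card ι / 16))) := by
  have hdev (ω : ι → Fin M) :
      deviation m (fun _ => 1) ω = #(randomSet m ω) - m / M * Fintype.card ι := by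
    simp [deviation_eq]
  have := card_abs_deviation_ge_le_exp hmM (a := fun _ : ι => 1) (t := m / M * Fintype.card ι / 2)
    (fun _ => by simp) hμ (by simp) (by positivity) (by linarith)
  simp only [hdev] at this
  convert this using 4
  field_simp
  ring

lemma card_card_randomSet_inter_gt_le {m : ℕ} (hmM : m ≤ M) (A : Finset ι) {η : ℝ}
    (hmη : 4 * (m / M) ≤ η) (hA : 0 < η * #A) :
    (#{ω : ι → Fin M | η * #A < #(randomSet m ω ∩ A)} : ℝ) ≤
      M ^ Fintype.card ι * exp (-(η * #A / 4)) := by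
  set a : ι → ℝ := fun x => if x ∈ A then 1 else 0
  have hdev (ω : ι → Fin M) : deviation m a ω = #(randomSet m ω ∩ A) - m / M * #A := by
    simp [a, deviation_eq]
  have ha2 : m / M * ∑ x, a x ^ 2 ≤ η * #A / 4 := by
    have : ∑ x, a x ^ 2 = #A := by simp [a]
    rw [this]
    nlinarith [(Nat.cast_nonneg #A : (0 : ℝ) ≤ #A)]
  have hsub : ({ω : ι → Fin M | η * #A < #(randomSet m ω ∩ A)} : Finset _) ⊆
      ({ω : ι → Fin M | η * #A / 2 ≤ deviation m a ω} : Finset _) := by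
    intro ω hω
    rw [mem_filter] at hω ⊢
    refine ⟨hω.1, ?_⟩
    rw [hdev]
    nlinarith [hω.2, (Nat.cast_nonneg #A : (0 : ℝ) ≤ #A)]
  have := card_deviation_ge_le_exp hmM (a := a) (s := η * #A / 4) (t := η * #A / 2)
    (fun x => by by_cases hx : x ∈ A <;> simp [a, hx]) (by positivity) ha2 (by positivity)
    (by linarith)
  refine ((Nat.cast_le.mpr (card_le_card hsub)).trans this).trans_eq ?_
  congr 3
  field_simp
  ring

lemma card_norm_sum_randomSet_gt_le {m : ℕ} (hmM : m ≤ M) {a : ι → ℂ} (ha : ∀ x, ‖a x‖ ≤ 1)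
    (ha₀ : ∑ x, a x = 0) {s t : ℝ} (hs : 0 < s) (hμs : m / M * Fintype.card ι ≤ s) (ht₀ : 0 ≤ t)
    (ht : t ≤ 2 * s) :
    (#{ω : ι → Fin M | 2 * t < ‖∑ x ∈ randomSet m ω, a x‖} : ℝ) ≤
      4 * (M ^ Fintype.card ι * exp (-(t ^ 2 / (4 * s)))) := by
  have hre (ω : ι → Fin M) :
      (∑ x ∈ randomSet m ω, a x).re = deviation m (fun x => (a x).re) ω := by
    simp [deviation_eq, ← Complex.re_sum, ha₀]
  have him (ω : ι → Fin M) :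
      (∑ x ∈ randomSet m ω, a x).im = deviation m (fun x => (a x).im) ω := by
    simp [deviation_eq, ← Complex.im_sum, ha₀]
  have hsq {f : ℂ → ℝ} (hf : ∀ z, |f z| ≤ ‖z‖) : m / M * ∑ x, f (a x) ^ 2 ≤ s := by
    refine le_trans (mul_le_mul_of_nonneg_left ?_ (by positivity)) hμs
    refine (sum_le_card_nsmul _ _ 1 fun x _ => ?_).trans (by simp)
    rw [← sq_abs]
    exact pow_le_one₀ (abs_nonneg _) ((hf _).trans (ha x))
  have hsub : #{ω : ι → Fin M | 2 * t < ‖∑ x ∈ randomSet m ω, a x‖} ≤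
      #{ω : ι → Fin M | t ≤ |deviation m (fun x => (a x).re) ω|} +
        #{ω : ι → Fin M | t ≤ |deviation m (fun x => (a x).im) ω|} := by
    refine (card_le_card fun ω => ?_).trans (card_union_le _ _)
    simp only [mem_filter, mem_univ, true_and, mem_union, ← hre, ← him]
    intro h
    by_contra! h'
    linarith [Complex.norm_le_abs_re_add_abs_im (∑ x ∈ randomSet m ω, a x)]
  have h₁ := card_abs_deviation_ge_le_exp hmM (fun x => (Complex.abs_re_le_norm _).trans (ha x))
    hs (hsq Complex.abs_re_le_norm) ht₀ ht
  have h₂ := card_abs_deviation_ge_le_exp hmM (fun x => (Complex.abs_im_le_norm _).trans (ha x))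
    hs (hsq Complex.abs_im_le_norm) ht₀ ht
  have := (Nat.cast_le (α := ℝ)).mpr hsub
  push_cast at this
  linarith

end RandomSet

lemma dft_indicator {p n : ℕ} [NeZero p] (E : Finset (Fin n → ZMod p)) (ξ : Fin n → ZMod p) :
    dft (fun x => if x ∈ E then 1 else 0) ξ = ∑ x ∈ E, e p (-(∑ i, x i * ξ i)) := by
  simp [dft, mul_ite, sum_ite_mem]

lemma cast_div_pow_mul_card_eq {p n : ℕ} [NeZero p] (m : ℕ) :
    (m / (p ^ n : ℕ) * Fintype.card (Fin n → ZMod p) : ℝ) = m := by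
  rw [show (Fintype.card (Fin n → ZMod p) : ℝ) = (p ^ n : ℕ) by simp,
    div_mul_cancel₀ _ (by simp [NeZero.ne p])]

lemma card_norm_dft_randomSet_gt_le {p n m : ℕ} [NeZero p] (hmM : m ≤ p ^ n) (hm : 0 < m)
    (hmp : (n + 2) * log p ≤ m) {ξ : Fin n → ZMod p} (hξ : ξ ≠ 0) :
    (#{ω : (Fin n → ZMod p) → Fin (p ^ n) |
        4 * √((n + 2) * m * log p) < ‖dft (fun x => if x ∈ randomSet m ω then 1 else 0) ξ‖} : ℝ) ≤
      4 * (((p ^ n : ℕ) : ℝ) ^ Fintype.card (Fin n → ZMod p) * ((p : ℝ) ^ (n + 2))⁻¹) := by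
  have hm' : (0 : ℝ) < m := by exact_mod_cast hm
  have hp₀ : (0 : ℝ) < p := by exact_mod_cast Nat.pos_of_neZero p
  have hlog : 0 ≤ log p := log_natCast_nonneg p
  have ht : 2 * √((n + 2) * m * log p) ≤ 2 * m := by
    refine mul_le_mul_of_nonneg_left (sqrt_le_iff.mpr ⟨hm'.le, ?_⟩) zero_le_two
    nlinarith
  have hexp : exp (-((2 * √((n + 2) * m * log p)) ^ 2 / (4 * m))) = ((p : ℝ) ^ (n + 2))⁻¹ := by
    rw [mul_pow, sq_sqrt (by positivity), ← exp_log (pow_pos hp₀ (n + 2)), ← exp_neg, log_pow]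
    congr 1
    field_simp
    push_cast
    ring
  have := card_norm_sum_randomSet_gt_le hmM (fun x => (norm_e p _).le)
    (sum_e_neg_dotProduct_eq_zero hξ) hm' (cast_div_pow_mul_card_eq m).le (by positivity) ht
  simp only [dft_indicator]
  rw [← hexp]
  convert this using 4
  norm_num [← mul_assoc]

lemma sum_card_norm_dft_randomSet_gt_le {p n m : ℕ} [NeZero p] (hmM : m ≤ p ^ n) (hm : 0 < m)
    (hmp : (n + 2) * log p ≤ m) (hp : 4 ≤ p) :
    ∑ ξ ∈ ({ξ | ξ ≠ 0} : Finset (Fin n → ZMod p)),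
      (#{ω : (Fin n → ZMod p) → Fin (p ^ n) |
        4 * √((n + 2) * m * log p) < ‖dft (fun x => if x ∈ randomSet m ω then 1 else 0) ξ‖} : ℝ) ≤
      ((p ^ n : ℕ) : ℝ) ^ Fintype.card (Fin n → ZMod p) / 4 := by
  set R : ℝ := ((p ^ n : ℕ) : ℝ) ^ Fintype.card (Fin n → ZMod p)
  have hp₄ : (4 : ℝ) ≤ p := by exact_mod_cast hp
  have hS : (#({ξ | ξ ≠ 0} : Finset (Fin n → ZMod p)) : ℝ) ≤ (p : ℝ) ^ n := by
    exact_mod_cast (card_le_univ _).trans_eq (by simp)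
  calc _ ≤ ∑ ξ ∈ ({ξ | ξ ≠ 0} : Finset (Fin n → ZMod p)), 4 * (R * ((p : ℝ) ^ (n + 2))⁻¹) :=
        sum_le_sum fun ξ hξ => card_norm_dft_randomSet_gt_le hmM hm hmp (mem_filter.mp hξ).2
    _ ≤ (p : ℝ) ^ n * (4 * (R * ((p : ℝ) ^ (n + 2))⁻¹)) := by
        rw [sum_const, nsmul_eq_mul]
        gcongr
    _ = R * (4 / (p : ℝ) ^ 2) := by
        field_simp
        ring
    _ ≤ R * (1 / 4) := by
        refine mul_le_mul_of_nonneg_left ?_ (by positivity)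
        rw [div_le_div_iff₀ (by positivity) (by norm_num)]
        nlinarith
    _ = R / 4 := by ring

lemma exp_neg_le_inv_of_log_le {k x : ℝ} (hk : 0 < k) (h : log k ≤ x) : exp (-x) ≤ k⁻¹ := by
  calc exp (-x) ≤ exp (-log k) := exp_le_exp.mpr (neg_le_neg h)
    _ = k⁻¹ := by rw [exp_neg, exp_log hk]

lemma exists_good_randomSet {p n m : ℕ} [NeZero p] {η : ℝ} (A : Finset (Fin n → ZMod p))
    (hmM : m ≤ p ^ n) (hp : 4 ≤ p) (hm : 16 * log 8 ≤ m) (hmp : (n + 2) * log p ≤ m)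
    (hmη : 4 * m ≤ η * p ^ n) (hAη : 4 * log 4 ≤ η * #A) :
    ∃ ω : (Fin n → ZMod p) → Fin (p ^ n), |(#(randomSet m ω) : ℝ) - m| < m / 2 ∧
      #(randomSet m ω ∩ A) ≤ η * #A ∧ ∀ ξ, ξ ≠ 0 →
        ‖dft (fun x => if x ∈ randomSet m ω then 1 else 0) ξ‖ ≤ 4 * √((n + 2) * m * log p) := by
  set Ω := (Fin n → ZMod p) → Fin (p ^ n)
  set R : ℝ := ((p ^ n : ℕ) : ℝ) ^ Fintype.card (Fin n → ZMod p)
  have hR : 0 < R := pow_pos (by simp [Nat.pos_of_neZero p]) _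
  have hpn : ((p ^ n : ℕ) : ℝ) = (p : ℝ) ^ n := Nat.cast_pow p n
  have hμ := cast_div_pow_mul_card_eq (p := p) (n := n) m
  have hm₀ : (0 : ℝ) < m := lt_of_lt_of_le (by positivity) hm
  set B₁ : Finset Ω := {ω | m / 2 ≤ |(#(randomSet m ω) : ℝ) - m|}
  set B₂ : Finset Ω := {ω | η * #A < #(randomSet m ω ∩ A)}
  set B₃ := fun ξ : Fin n → ZMod p => ({ω : Ω |
    4 * √((n + 2) * m * log p) < ‖dft (fun x => if x ∈ randomSet m ω then 1 else 0) ξ‖} : Finset Ω)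
  set S : Finset (Fin n → ZMod p) := {ξ | ξ ≠ 0}
  have h₁ : (#B₁ : ℝ) ≤ R / 4 := by
    have := card_abs_card_randomSet_sub_ge_le (ι := Fin n → ZMod p) hmM (by rwa [hμ])
    rw [hμ] at this
    refine this.trans ?_
    have := exp_neg_le_inv_of_log_le (k := 8) (x := m / 16) (by norm_num) (by linarith)
    nlinarith
  have h₂ : (#B₂ : ℝ) ≤ R / 4 := by
    have hq : 4 * (m / (p ^ n : ℕ) : ℝ) ≤ η := by
      rw [← mul_div_assoc, div_le_iff₀ (by simp [Nat.pos_of_neZero p]), hpn]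
      exact hmη
    refine (card_card_randomSet_inter_gt_le hmM A hq (lt_of_lt_of_le (by positivity) hAη)).trans ?_
    have := exp_neg_le_inv_of_log_le (k := 4) (x := η * #A / 4) (by norm_num) (by linarith)
    nlinarith
  have hbad : #(B₁ ∪ B₂ ∪ S.biUnion B₃) < #(univ : Finset Ω) := by
    rw [← Nat.cast_lt (α := ℝ), card_univ, show (Fintype.card Ω : ℝ) = R by simp [Ω, R]]
    calc (#(B₁ ∪ B₂ ∪ S.biUnion B₃) : ℝ) ≤ #B₁ + #B₂ + ∑ ξ ∈ S, (#(B₃ ξ) : ℝ) := by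
          exact_mod_cast (card_union_le _ _).trans
            (add_le_add (card_union_le _ _) card_biUnion_le)
      _ < R := by
          linarith [sum_card_norm_dft_randomSet_gt_le hmM (by exact_mod_cast hm₀) hmp hp]
  obtain ⟨ω, -, hω⟩ := exists_mem_notMem_of_card_lt_card hbad
  simp only [mem_union, mem_filter, mem_univ, true_and, mem_biUnion, not_or, not_exists,
    not_and, not_lt, not_le, S, B₁, B₂, B₃] at hω
  exact ⟨ω, hω.1.1, hω.1.2, hω.2⟩

theorem exists_salem_set_of_bounds {p n m : ℕ} [NeZero p] {η : ℝ} (A : Finset (Fin n → ZMod p))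
    (hmM : m ≤ p ^ n) (hp : 4 ≤ p) (hm : 16 * log 8 ≤ m) (hmp : (n + 2) * log p ≤ m)
    (hmη : 4 * m ≤ η * p ^ n) (hAη : 4 * log 4 ≤ η * #A) :
    ∃ E : Finset (Fin n → ZMod p), m / 2 ≤ (#E : ℝ) ∧ (#E : ℝ) ≤ 3 * m / 2 ∧
      (∀ ξ, ξ ≠ 0 → ‖dft (fun x => if x ∈ E then 1 else 0) ξ‖ ≤
        4 * √(2 * (n + 2)) * √(#E : ℝ) * √(log p)) ∧
      #(E ∩ A) ≤ η * #A := by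
  obtain ⟨ω, hE, hEA, hF⟩ := exists_good_randomSet A hmM hp hm hmp hmη hAη
  have hmE := abs_lt.mp hE
  refine ⟨randomSet m ω, by linarith, by linarith, fun ξ hξ => (hF ξ hξ).trans ?_, hEA⟩
  rw [mul_assoc 4, mul_assoc 4, ← sqrt_mul (by positivity), ← sqrt_mul (by positivity)]
  refine mul_le_mul_of_nonneg_left (sqrt_le_sqrt ?_) zero_le_four
  have := mul_le_mul_of_nonneg_left (show (m : ℝ) ≤ 2 * #(randomSet m ω) by linarith)
    (mul_nonneg (by positivity : (0 : ℝ) ≤ n + 2) (log_natCast_nonneg p))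
  linarith

lemma eventually_salem_conditions {n : ℕ} {α η : ℝ} (hα : 0 < α) (hαn : α < n) (hη : 0 < η) :
    ∀ᶠ p : ℕ in atTop, 4 ≤ p ∧ 16 * log 8 ≤ (p : ℝ) ^ α ∧
      (n + 2) * log p ≤ (p : ℝ) ^ α ∧ 8 * (p : ℝ) ^ α ≤ η * (p : ℝ) ^ n ∧
      4 * log 4 ≤ η * (p : ℝ) ^ (α / 2) := by
  have h₁ : ∀ᶠ y : ℝ in atTop, 16 * log 8 ≤ y ^ α :=
    (tendsto_rpow_atTop hα).eventually_ge_atTop _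
  have h₂ : ∀ᶠ y : ℝ in atTop, (n + 2) * log y ≤ y ^ α := by
    filter_upwards [((isLittleO_log_rpow_atTop hα).const_mul_left (n + 2)).bound one_pos,
      eventually_ge_atTop 0] with y hy hy₀
    rw [one_mul, norm_eq_abs, norm_eq_abs, abs_of_nonneg (rpow_nonneg hy₀ _)] at hy
    exact (le_abs_self _).trans hy
  have h₃ : ∀ᶠ y : ℝ in atTop, 8 * y ^ α ≤ η * y ^ n := by
    filter_upwards [(tendsto_rpow_neg_atTop (sub_pos.mpr hαn)).eventually_le_const
      (div_pos hη (by norm_num : (0 : ℝ) < 8)), eventually_gt_atTop 0] with y hy hy₀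
    rw [le_div_iff₀ (by norm_num)] at hy
    calc 8 * y ^ α = y ^ (-(n - α)) * 8 * y ^ (n : ℝ) := by
          rw [mul_comm _ (8 : ℝ), mul_assoc, ← rpow_add hy₀]; ring_nf
      _ ≤ η * y ^ n := by rw [rpow_natCast]; gcongr
  have h₄ : ∀ᶠ y : ℝ in atTop, 4 * log 4 ≤ η * y ^ (α / 2) :=
    ((tendsto_rpow_atTop (half_pos hα)).const_mul_atTop hη).eventually_ge_atTop _
  exact (eventually_ge_atTop 4).and
    (tendsto_natCast_atTop_atTop.eventually (h₁.and (h₂.and (h₃.and h₄))))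

/-- Random Salem-type sets in `F^n`: for `0 < α < n` and large primes `p` there
is `E ⊆ F^n` with `|E| ≈ p^α`, `|1̂_E(ξ)| ≤ C_n √|E| √(log p)` for `ξ ≠ 0`,
and, for any fixed `η > 0` and any `A ⊆ F^n` with `|A| ≥ p^{α/2}`, additionally
`|E ∩ A| ≤ η |A|`. -/
theorem salem_set_exists (n : ℕ) (α : ℝ) (hα0 : 0 < α) (hαn : α < n) :
    ∃ c₁ : ℝ, 0 < c₁ ∧ ∃ c₂ : ℝ, 0 < c₂ ∧ ∃ Cn : ℝ, 0 < Cn ∧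
      ∀ η : ℝ, 0 < η →
        ∃ p₀ : ℕ, ∀ (p : ℕ) [Fact p.Prime], p₀ ≤ p →
          ∀ A : Finset (Fin n → ZMod p), (p : ℝ) ^ (α / 2) ≤ (A.card : ℝ) →
            ∃ E : Finset (Fin n → ZMod p),
              c₁ * (p : ℝ) ^ α ≤ (E.card : ℝ) ∧
              (E.card : ℝ) ≤ c₂ * (p : ℝ) ^ α ∧
              (∀ ξ : Fin n → ZMod p, ξ ≠ 0 →
                ‖dft (fun x => if x ∈ E then (1 : ℂ) else 0) ξ‖
                  ≤ Cn * Real.sqrt E.card * Real.sqrt (Real.log p)) ∧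
              ((E ∩ A).card : ℝ) ≤ η * (A.card : ℝ) := by
  refine ⟨1 / 2, by norm_num, 3, by norm_num, 4 * √(2 * (n + 2)), by positivity, fun η hη => ?_⟩
  obtain ⟨p₀, hp₀⟩ := eventually_atTop.mp (eventually_salem_conditions hα0 hαn hη)
  refine ⟨p₀, fun p _ hp A hA => ?_⟩
  obtain ⟨hp4, h8, hlog, hpη, hA4⟩ := hp₀ p hp
  have hp1 : (1 : ℝ) ≤ p := by exact_mod_cast (show 1 ≤ p by omega)
  set m := ⌈(p : ℝ) ^ α⌉₊
  have hm : (p : ℝ) ^ α ≤ m := Nat.le_ceil _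
  have hm2 : (m : ℝ) ≤ 2 * (p : ℝ) ^ α :=
    Nat.ceil_le_two_mul (by linarith [one_le_rpow hp1 hα0.le])
  have hmM : m ≤ p ^ n := Nat.ceil_le.mpr <| by
    rw [Nat.cast_pow, ← rpow_natCast]
    exact rpow_le_rpow_of_exponent_le hp1 hαn.le
  obtain ⟨E, hE₁, hE₂, hE₃, hE₄⟩ := exists_salem_set_of_bounds (η := η) A hmM hp4 (by linarith)
    (by linarith) (by linarith) (by nlinarith)
  exact ⟨E, by linarith, by linarith, hE₃, hE₄⟩
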